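/- There exist an assignment of two submodular utility functions with binary marginal gains to two agents on a cycle of length four such that no connected allocation is PMMS. -/

import Mathlib

namespace GraphFair

variable {V : Type*}

/-- A bundle is connected if it is empty or induces a connected subgraph of `G`. -/
def BundleConn (G : SimpleGraph V) (B : Finset V) : Prop :=
  B = ∅ ∨ (G.induce (B : Set V)).Connected

/-- A connected allocation of all the items among `n` agents: the bundles cover `V`,
are pairwise disjoint, and each bundle is connected in `G`. -/
def IsConnAlloc (G : SimpleGraph V) {n : ℕ} (A : Fin n → Finset V) : Prop :=
  (∀ v : V, ∃ i, v ∈ A i) ∧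
  (∀ i j : Fin n, i ≠ j → Disjoint (A i) (A j)) ∧
  (∀ i, BundleConn G (A i))

variable [DecidableEq V]

/-- Partitions of `X` into two bundles, each connected in the induced subgraph `G[X]`
(for `Y ⊆ X`, connectivity of `Y` in `G[X]` is the same as connectivity of `Y` in `G`). -/
def Part2 (G : SimpleGraph V) (X : Finset V) : Set (Finset V × Finset V) :=
  {p | p.1 ∪ p.2 = X ∧ Disjoint p.1 p.2 ∧ BundleConn G p.1 ∧ BundleConn G p.2}

/-- The pairwise maximin share of a bundle `X` with respect to utility `u`:
the maximum over partitions of `X` into two connected bundles of the minimum utility. -/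
noncomputable def pmms (G : SimpleGraph V) (u : Finset V → ℝ) (X : Finset V) : ℝ :=
  sSup ((fun p : Finset V × Finset V => min (u p.1) (u p.2)) '' Part2 G X)

/-- The `n`-agent maximin share of the whole vertex set: maximum over partitions of `V`
into `n` connected bundles of the minimum utility of a bundle. -/
noncomputable def mms (G : SimpleGraph V) (u : Finset V → ℝ) (n : ℕ) : ℝ :=
  sSup ((fun A : Fin n → Finset V => ⨅ i, u (A i)) '' {A | IsConnAlloc G A})

/-- Agents `i` and `j` are adjacent under allocation `A`. -/
def AdjUnder (G : SimpleGraph V) {n : ℕ} (A : Fin n → Finset V) (i j : Fin n) : Prop :=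
  ∃ v ∈ A i, ∃ w ∈ A j, G.Adj v w

/-- An allocation is `α`-PMMS if every agent with an empty bundle, and every agent with
respect to each of her neighbours, receives at least `α` times her pairwise maximin share. -/
def IsAlphaPMMS (G : SimpleGraph V) {n : ℕ} (u : Fin n → Finset V → ℝ)
    (A : Fin n → Finset V) (α : ℝ) : Prop :=
  ∀ i j : Fin n, i ≠ j → (A i = ∅ ∨ AdjUnder G A i j) →
    α * pmms G (u i) (A i ∪ A j) ≤ u i (A i)

/-- An allocation is `α`-MMS if every agent receives at least `α` times her maximin share. -/
def IsAlphaMMS (G : SimpleGraph V) {n : ℕ} (u : Fin n → Finset V → ℝ)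
    (A : Fin n → Finset V) (α : ℝ) : Prop :=
  ∀ i : Fin n, α * mms G (u i) n ≤ u i (A i)

/-- An additive (nonnegative) utility function. -/
def AdditiveUtil (u : Finset V → ℝ) : Prop :=
  (∀ X : Finset V, u X = ∑ v ∈ X, u {v}) ∧ ∀ v : V, 0 ≤ u {v}

/-- A binary additive utility function. -/
def BinaryAdditiveUtil (u : Finset V → ℝ) : Prop :=
  (∀ X : Finset V, u X = ∑ v ∈ X, u {v}) ∧ ∀ v : V, u {v} = 0 ∨ u {v} = 1

/-- A monotone (nonnegative) utility function. -/
def MonotoneUtil (u : Finset V → ℝ) : Prop :=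
  (∀ X Y : Finset V, X ⊆ Y → u X ≤ u Y) ∧ 0 ≤ u ∅

/-- An allocation is `α`-EF1. -/
def IsAlphaEF1 {n : ℕ} (u : Fin n → Finset V → ℝ) (A : Fin n → Finset V) (α : ℝ) : Prop :=
  ∀ i j : Fin n, i ≠ j → A j ≠ ∅ → ∃ v ∈ A j, α * u i ((A j).erase v) ≤ u i (A i)

/-- An allocation is EFX (envy-free up to any item). -/
def IsEFX {n : ℕ} (u : Fin n → Finset V → ℝ) (A : Fin n → Finset V) : Prop :=
  ∀ i j : Fin n, i ≠ j → A j ≠ ∅ → ∀ v ∈ A j, u i ((A j).erase v) ≤ u i (A i)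

/-- The number of agents receiving positive utility. -/
noncomputable def nashCount {n : ℕ} (u : Fin n → Finset V → ℝ) (A : Fin n → Finset V) : ℕ :=
  (Finset.univ.filter fun i : Fin n => 0 < u i (A i)).card

/-- The product of the positive utilities. -/
noncomputable def nashProd {n : ℕ} (u : Fin n → Finset V → ℝ) (A : Fin n → Finset V) : ℝ :=
  ∏ i ∈ Finset.univ.filter (fun i : Fin n => 0 < u i (A i)), u i (A i)

/-- A maximum Nash welfare (MNW) connected allocation: maximizes the number of agents with
positive utility and, subject to that, the product of the positive utilities. -/
def IsMNW (G : SimpleGraph V) {n : ℕ} (u : Fin n → Finset V → ℝ)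
    (A : Fin n → Finset V) : Prop :=
  IsConnAlloc G A ∧
  (∀ B : Fin n → Finset V, IsConnAlloc G B → nashCount u B ≤ nashCount u A) ∧
  (∀ B : Fin n → Finset V, IsConnAlloc G B →
    nashCount u B = nashCount u A → nashProd u B ≤ nashProd u A)

/-- `A'` is a Pareto-improvement of `A`. -/
def ParetoImproves {n : ℕ} (u : Fin n → Finset V → ℝ) (A' A : Fin n → Finset V) : Prop :=
  (∀ i, u i (A i) ≤ u i (A' i)) ∧ ∃ j, u j (A j) < u j (A' j)

/-- A connected allocation is Pareto-optimal if no connected allocation Pareto-improves it. -/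
def IsParetoOptimal (G : SimpleGraph V) {n : ℕ} (u : Fin n → Finset V → ℝ)
    (A : Fin n → Finset V) : Prop :=
  ∀ B : Fin n → Finset V, IsConnAlloc G B → ¬ ParetoImproves u B A

/-- The vector of agents' utilities rearranged in increasing order. -/
noncomputable def sortedUtils {n : ℕ} (u : Fin n → Finset V → ℝ)
    (A : Fin n → Finset V) : List ℝ :=
  (((Finset.univ : Finset (Fin n)).val.map fun i => u i (A i)).sort (· ≤ ·))

/-- `A'` is a leximin improvement of `A`: the sorted utility vector of `A'` is
lexicographically greater than that of `A`. -/
def LeximinImproves {n : ℕ} (u : Fin n → Finset V → ℝ) (A' A : Fin n → Finset V) : Prop :=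
  List.Lex (· < ·) (sortedUtils u A) (sortedUtils u A')

/-- A connected leximin allocation. -/
def IsLeximin (G : SimpleGraph V) {n : ℕ} (u : Fin n → Finset V → ℝ)
    (A : Fin n → Finset V) : Prop :=
  IsConnAlloc G A ∧ ∀ B : Fin n → Finset V, IsConnAlloc G B → ¬ LeximinImproves u B A

/-- `G` is a star: there is a central vertex adjacent to exactly all other vertices. -/
def IsStar (G : SimpleGraph V) : Prop :=
  ∃ c : V, ∀ a b : V, G.Adj a b ↔ a ≠ b ∧ (a = c ∨ b = c)

/-- A submodular utility function. -/
def SubmodularUtil (u : Finset V → ℝ) : Prop :=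
  ∀ X Y : Finset V, u (X ∪ Y) + u (X ∩ Y) ≤ u X + u Y

/-- A utility function with binary marginal gains (and `u ∅ = 0`). -/
def BinaryMarginalGains (u : Finset V → ℝ) : Prop :=
  u ∅ = 0 ∧ ∀ (X : Finset V) (v : V),
    u (insert v X) - u X = 0 ∨ u (insert v X) - u X = 1

/-- On the path with `m` vertices (edges numbered `1, …, m-1` from left to right),
`itv m x y` is the bundle `[x, y]` of all vertices between positions `x` and `y`. -/
def itv (m x y : ℕ) : Finset (Fin m) :=
  Finset.univ.filter fun v : Fin m => x ≤ v.val ∧ v.val < y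

end GraphFair

/-- The cycle of length four. -/
def cycle4 : SimpleGraph (Fin 4) := SimpleGraph.fromRel fun a b => b = a + 1

/-!
Each agent's utility counts how many of her two blocks a bundle meets, agent `0` having the
blocks `{0, 1}, {2, 3}` and agent `1` the blocks `{1, 2}, {3, 0}`; such partition-matroid ranks are
submodular with binary marginal gains. Either agent secures `2` by cutting the cycle along the
other agent's blocks, so in a PMMS allocation both bundles are nonempty, hence adjacent, and both
agents get `2`. But a bundle meeting both blocks of agent `0` whose complement meets both blocks
of agent `1` is `{0, 2}` or `{1, 3}`, which is disconnected.
-/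

namespace GraphFair

open Finset SimpleGraph

variable {V : Type*}

section Utility

variable [DecidableEq V] {ι : Type*} [DecidableEq ι]

/-- The rank function of the unit-capacity partition matroid whose blocks are the fibres of `f`. -/
def partitionRank (f : V → ι) (X : Finset V) : ℝ := #(X.image f)

theorem submodularUtil_partitionRank (f : V → ι) : SubmodularUtil (partitionRank f) := by
  intro X Y
  have hinter : #((X ∩ Y).image f) ≤ #(X.image f ∩ Y.image f) :=
    card_le_card (image_inter_subset f X Y)
  have := card_union_add_card_inter (X.image f) (Y.image f)
  simp only [partitionRank, image_union]
  exact_mod_cast (by omega : #(X.image f ∪ Y.image f) + #((X ∩ Y).image f) ≤ _)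

theorem binaryMarginalGains_partitionRank (f : V → ι) :
    BinaryMarginalGains (partitionRank f) := by
  refine ⟨by simp [partitionRank], fun X v => ?_⟩
  simp only [partitionRank, image_insert]
  by_cases hv : f v ∈ X.image f
  · left; simp [insert_eq_of_mem hv]
  · right; simp [card_insert_of_notMem hv]

end Utility

section Graph

variable {G : SimpleGraph V}

theorem bundleConn_pair [DecidableEq V] {a b : V} (h : G.Adj a b) : BundleConn G {a, b} := by
  right
  rw [coe_pair]
  exact induce_pair_connected_of_adj h

theorem not_bundleConn_pair [DecidableEq V] {a b : V} (hab : a ≠ b) (h : ¬ G.Adj a b) :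
    ¬ BundleConn G {a, b} := by
  rintro (hempty | hconn)
  · exact (insert_ne_empty a {b}) hempty
  obtain ⟨p⟩ := hconn.preconnected ⟨a, by simp⟩ ⟨b, by simp⟩
  obtain ⟨⟨⟨x, y⟩, hxy⟩, -, hx, hy⟩ := p.exists_boundary_dart {⟨a, by simp⟩} rfl
    (by simpa using hab.symm)
  have hx : x.val = a := by simpa using congrArg Subtype.val hx
  have hy : y.val = b := by
    have := y.prop
    simp only [coe_insert, coe_singleton, Set.mem_insert_iff, Set.mem_singleton_iff] at this
    exact this.resolve_left fun h' => hy (Subtype.ext h')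
  have hxy : G.Adj x y := hxy
  rw [hx, hy] at hxy
  exact h hxy

theorem _root_.SimpleGraph.Preconnected.exists_adj_of_mem_of_notMem (hG : G.Preconnected)
    {S : Set V} {v w : V} (hv : v ∈ S) (hw : w ∉ S) : ∃ x ∈ S, ∃ y ∉ S, G.Adj x y := by
  obtain ⟨p⟩ := hG v w
  obtain ⟨d, -, hd1, hd2⟩ := p.exists_boundary_dart S hv hw
  exact ⟨_, hd1, _, hd2, d.adj⟩

theorem AdjUnder.symm {n : ℕ} {A : Fin n → Finset V} {i j : Fin n} (h : AdjUnder G A i j) :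
    AdjUnder G A j i := by
  obtain ⟨v, hv, w, hw, hvw⟩ := h
  exact ⟨w, hw, v, hv, hvw.symm⟩

theorem le_pmms [DecidableEq V] {u : Finset V → ℝ} {X : Finset V}
    {p : Finset V × Finset V} (hp : p ∈ Part2 G X) : min (u p.1) (u p.2) ≤ pmms G u X := by
  have hfin : (Part2 G X).Finite := by
    refine ((X.powerset ×ˢ X.powerset : Finset _).finite_toSet).subset fun q hq => ?_
    obtain ⟨hunion, -⟩ := hq
    simp only [coe_product, coe_powerset, Set.mem_prod, Set.mem_preimage, Set.mem_powerset_iff,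
      coe_subset, ← hunion]
    exact ⟨subset_union_left, subset_union_right⟩
  exact le_csSup ((hfin.image _).bddAbove) ⟨p, hp, rfl⟩

end Graph

section TwoAgents

variable [Fintype V] [DecidableEq V] {G : SimpleGraph V} {A : Fin 2 → Finset V}

theorem IsConnAlloc.eq_compl (hA : IsConnAlloc G A) : A 1 = (A 0)ᶜ := by
  obtain ⟨hcov, hdisj, -⟩ := hA
  ext v
  rw [mem_compl]
  refine ⟨fun hv hv' => disjoint_left.mp (hdisj 0 1 (by decide)) hv' hv, fun hv => ?_⟩
  obtain ⟨i, hi⟩ := hcov v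
  fin_cases i
  exacts [absurd hi hv, hi]

theorem IsConnAlloc.union_eq_univ (hA : IsConnAlloc G A) {i j : Fin 2} (hij : i ≠ j) :
    A i ∪ A j = univ := by
  fin_cases i <;> fin_cases j <;> simp_all [hA.eq_compl, union_comm]

theorem IsConnAlloc.adjUnder (hA : IsConnAlloc G A) (hG : G.Preconnected)
    (h0 : (A 0).Nonempty) (h1 : (A 1).Nonempty) : AdjUnder G A 0 1 := by
  obtain ⟨v, hv⟩ := h0
  obtain ⟨w, hw⟩ := h1
  rw [hA.eq_compl, mem_compl] at hw
  obtain ⟨x, hx, y, hy, hxy⟩ :=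
    hG.exists_adj_of_mem_of_notMem (S := (A 0 : Set V)) (mem_coe.mpr hv) (by simpa using hw)
  exact ⟨x, hx, y, by simpa [hA.eq_compl] using hy, hxy⟩

theorem IsAlphaPMMS.pmms_univ_le {u : Fin 2 → Finset V → ℝ} (hP : IsAlphaPMMS G u A 1)
    (hA : IsConnAlloc G A) {i j : Fin 2} (hij : i ≠ j) (h : A i = ∅ ∨ AdjUnder G A i j) :
    pmms G (u i) univ ≤ u i (A i) := by
  simpa [hA.union_eq_univ hij] using hP i j hij h

end TwoAgents

end GraphFair

open GraphFair Finset SimpleGraph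

theorem cycle4_eq_cycleGraph : cycle4 = cycleGraph 4 := by
  ext a b
  rw [cycle4, fromRel_adj]
  revert a b
  decide

theorem cycle4_preconnected : cycle4.Preconnected :=
  cycle4_eq_cycleGraph ▸ cycleGraph_preconnected

def cycle4Util (i : Fin 2) : Finset (Fin 4) → ℝ :=
  partitionRank (![![0, 0, 1, 1], ![1, 0, 0, 1]] i : Fin 4 → Fin 2)

theorem two_le_pmms_cycle4Util (i : Fin 2) : 2 ≤ pmms cycle4 (cycle4Util i) univ := by
  fin_cases i
  · refine le_trans ?_ (le_pmms (p := ({1, 2}, {3, 0})) ⟨by decide, by decide,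
      bundleConn_pair ?_, bundleConn_pair ?_⟩)
    · simp [cycle4Util, partitionRank]
    all_goals rw [cycle4_eq_cycleGraph]; decide
  · refine le_trans ?_ (le_pmms (p := ({0, 1}, {2, 3})) ⟨by decide, by decide,
      bundleConn_pair ?_, bundleConn_pair ?_⟩)
    · simp [cycle4Util, partitionRank]
    all_goals rw [cycle4_eq_cycleGraph]; decide

theorem eq_pair_of_two_le_cycle4Util {S : Finset (Fin 4)} (h0 : 2 ≤ cycle4Util 0 S)
    (h1 : 2 ≤ cycle4Util 1 Sᶜ) : S = {0, 2} ∨ S = {1, 3} := by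
  simp only [cycle4Util, partitionRank] at h0 h1
  norm_cast at h0 h1
  revert S
  decide

open GraphFair in
/-- There exist two submodular utility functions with binary marginal gains
for two agents on a cycle of length four such that no connected allocation is PMMS. -/
theorem exists_cycle4_no_pmms_submodular :
    ∃ u : Fin 2 → Finset (Fin 4) → ℝ,
      (∀ i, SubmodularUtil (u i) ∧ BinaryMarginalGains (u i)) ∧
      ∀ A : Fin 2 → Finset (Fin 4), IsConnAlloc cycle4 A →
        ¬ IsAlphaPMMS cycle4 u A 1 := by
  refine ⟨cycle4Util, fun i => ⟨submodularUtil_partitionRank _,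
    binaryMarginalGains_partitionRank _⟩, fun A hA hP => ?_⟩
  have hne {i j : Fin 2} (hij : i ≠ j) : (A i).Nonempty := by
    refine nonempty_iff_ne_empty.mpr fun h => ?_
    have := (two_le_pmms_cycle4Util i).trans (hP.pmms_univ_le hA hij (Or.inl h))
    norm_num [h, cycle4Util, partitionRank] at this
  have h0 : (A 0).Nonempty := hne (j := 1) (by decide)
  have h1 : (A 1).Nonempty := hne (j := 0) (by decide)
  have hadj := hA.adjUnder cycle4_preconnected h0 h1
  have hu0 := (two_le_pmms_cycle4Util 0).trans (hP.pmms_univ_le hA (by decide) (Or.inr hadj))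
  have hu1 := (two_le_pmms_cycle4Util 1).trans
    (hP.pmms_univ_le hA (by decide) (Or.inr hadj.symm))
  rw [hA.eq_compl] at hu1
  have hconn := hA.2.2 0
  obtain h | h := eq_pair_of_two_le_cycle4Util hu0 hu1 <;> rw [h] at hconn <;>
    exact not_bundleConn_pair (by decide) (by rw [cycle4_eq_cycleGraph]; decide) hconn
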